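/- Let k_1,…,k_n be positive integers. Then ζ⋆_𝒜(k_n,…,k_1) = (−1)^{k_1+⋯+k_n} · ζ⋆_𝒜(k_1,…,k_n) in 𝒜. -/

import Mathlib

open scoped BigOperators

/-- The product of `ℤ/pℤ` over all primes `p`. -/
abbrev PreA : Type := ∀ p : Nat.Primes, ZMod p

/-- The ideal of families that vanish for all but finitely many primes. -/
def nullIdeal : Ideal PreA where
  carrier := {f | {p | f p ≠ 0}.Finite}
  zero_mem' := by simp
  add_mem' := by
    intro f g hf hg
    refine (hf.union hg).subset fun p hp => ?_
    by_contra hc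
    simp only [Set.mem_union, Set.mem_setOf_eq, not_or, not_not] at hc
    exact hp (by simp [Set.mem_setOf_eq, hc.1, hc.2])
  smul_mem' := by
    intro c f hf
    refine hf.subset fun p hp => ?_
    simp only [Set.mem_setOf_eq] at hp ⊢
    intro h0
    exact hp (by simp [h0])

/-- The ring `𝒜 = (∏_p ℤ/pℤ)/(⊕_p ℤ/pℤ)`. -/
abbrev A : Type := PreA ⧸ nullIdeal

/-- `zetaSum p ks b` is `∑_{b > m₁ > ⋯ > m_n ≥ 1} ∏ mᵢ^{-kᵢ}` in `ℤ/pℤ`. -/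
def zetaSum (p : ℕ) : List ℕ → ℕ → ZMod p
  | [], _ => 1
  | k :: ks, b => ∑ m ∈ Finset.Ico 1 b, ((m : ZMod p)⁻¹) ^ k * zetaSum p ks m

/-- `zetaStarSum p ks b` is `∑_{b > m₁ ≥ ⋯ ≥ m_n ≥ 1} ∏ mᵢ^{-kᵢ}` in `ℤ/pℤ`. -/
def zetaStarSum (p : ℕ) : List ℕ → ℕ → ZMod p
  | [], _ => 1
  | k :: ks, b => ∑ m ∈ Finset.Ico 1 b, ((m : ZMod p)⁻¹) ^ k * zetaStarSum p ks (m + 1)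

/-- The finite multiple zeta value `ζ_𝒜(k₁,…,k_n)`. -/
def zetaA (ks : List ℕ) : A :=
  Ideal.Quotient.mk nullIdeal (fun p => zetaSum p ks p)

/-- The finite multiple zeta-star value `ζ⋆_𝒜(k₁,…,k_n)`. -/
def zetaStarA (ks : List ℕ) : A :=
  Ideal.Quotient.mk nullIdeal (fun p => zetaStarSum p ks p)

/-- `ℋ¹ = ℚ⟨z₁,z₂,…⟩`, the noncommutative polynomial algebra on variables `z_k`, `k ≥ 1`. -/
abbrev H1 : Type := MonoidAlgebra ℚ (FreeMonoid ℕ+)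

/-- The monomial (word) `z_{k₁} ⋯ z_{k_n}` in `ℋ¹`. -/
noncomputable def word (w : List ℕ+) : H1 :=
  MonoidAlgebra.of ℚ (FreeMonoid ℕ+) (FreeMonoid.ofList w)

/-- Shuffle product on words (with values in `ℋ¹`). -/
noncomputable def shuffleW : List ℕ+ → List ℕ+ → H1
  | [], w => word w
  | v, [] => word v
  | k :: v, l :: w => word [k] * shuffleW v (l :: w) + word [l] * shuffleW (k :: v) w
  termination_by v w => v.length + w.length
  decreasing_by all_goals first | (simp; omega) | simp | omega

/-- The shuffle product `ш` on `ℋ¹`, as the bilinear extension of `shuffleW`. -/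
noncomputable def shuffle (x y : H1) : H1 :=
  Finsupp.sum x.coeff fun v c => Finsupp.sum y.coeff fun w c' =>
    (c * c') • shuffleW (FreeMonoid.toList v) (FreeMonoid.toList w)

/-- Harmonic product on words (with values in `ℋ¹`). -/
noncomputable def harmW : List ℕ+ → List ℕ+ → H1
  | [], w => word w
  | v, [] => word v
  | k :: v, l :: w =>
      word [k] * harmW v (l :: w) + word [l] * harmW (k :: v) w
        + word [k + l] * harmW v w
  termination_by v w => v.length + w.length
  decreasing_by all_goals first | (simp; omega) | simp | omega

/-- The harmonic product `*` on `ℋ¹`, as the bilinear extension of `harmW`. -/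
noncomputable def harm (x y : H1) : H1 :=
  Finsupp.sum x.coeff fun v c => Finsupp.sum y.coeff fun w c' =>
    (c * c') • harmW (FreeMonoid.toList v) (FreeMonoid.toList w)

/-- Star-harmonic product on words (with values in `ℋ¹`). -/
noncomputable def harmStarW : List ℕ+ → List ℕ+ → H1
  | [], w => word w
  | v, [] => word v
  | k :: v, l :: w =>
      word [k] * harmStarW v (l :: w) + word [l] * harmStarW (k :: v) w
        - word [k + l] * harmStarW v w
  termination_by v w => v.length + w.length
  decreasing_by all_goals first | (simp; omega) | simp | omega

/-- The product `∗̄` on `ℋ¹`, as the bilinear extension of `harmStarW`. -/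
noncomputable def harmStar (x y : H1) : H1 :=
  Finsupp.sum x.coeff fun v c => Finsupp.sum y.coeff fun w c' =>
    (c * c') • harmStarW (FreeMonoid.toList v) (FreeMonoid.toList w)

/-- The image of a rational number in `𝒜`. -/
def ratA (q : ℚ) : A :=
  Ideal.Quotient.mk nullIdeal (fun p => (q.num : ZMod p) * ((q.den : ZMod p))⁻¹)

/-- The `ℚ`-linear map `Z_𝒜 : ℋ¹ → 𝒜` sending `z_{k₁} ⋯ z_{k_n}` to `ζ_𝒜(k₁,…,k_n)`. -/
noncomputable def ZA (x : H1) : A :=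
  Finsupp.sum x.coeff fun w c => ratA c * zetaA ((FreeMonoid.toList w).map (fun k => (k : ℕ)))

/-- The `ℚ`-linear map `Z̄_𝒜 : ℋ¹ → 𝒜` sending `z_{k₁} ⋯ z_{k_n}` to `ζ⋆_𝒜(k₁,…,k_n)`. -/
noncomputable def ZSA (x : H1) : A :=
  Finsupp.sum x.coeff fun w c => ratA c * zetaStarA ((FreeMonoid.toList w).map (fun k => (k : ℕ)))

/-- Sum of a list of positive integers (equal to the actual sum for nonempty lists). -/
def psum : List ℕ+ → ℕ+
  | [] => 1
  | k :: t => t.foldl (· + ·) k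

/-- The map `d` on words: `d(z_{k₁}⋯z_{k_n}) = ∑_{m} ∑_{0=i₀<⋯<i_m=n}
`z_{k_{i₀+1}+⋯+k_{i₁}} ⋯ z_{k_{i_{m-1}+1}+⋯+k_{i_m}}`. -/
noncomputable def dW (w : List ℕ+) : H1 :=
  ∑ c : Composition w.length, word ((w.splitWrtComposition c).map psum)

/-- `z_a` for a tuple `a = (a₁,…,a_m; b₁,…,b_m; c₁,…,c_n) ∈ I_{m,n}`:
`∑_{σ,τ ∈ S_m} z_{a_{σ(1)}} z_{b_{τ(1)}} ⋯ z_{a_{σ(m)}} z_{b_{τ(m)}} ш z_{c₁} ш ⋯ ш z_{c_n}`. -/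
noncomputable def zTuple {m n : ℕ} (a b : Fin m → ℕ+) (c : Fin n → ℕ+) : H1 :=
  ∑ σ : Equiv.Perm (Fin m), ∑ τ : Equiv.Perm (Fin m),
    (List.ofFn c).foldl (fun w k => shuffle w (word [k]))
      (word ((List.ofFn (fun i => [a (σ i), b (τ i)])).flatten))

/-- The statement `P_{m,n}`: `Z_𝒜(z_a) = Z̄_𝒜(z_a) = 0` for all `a ∈ I_{m,n}`. -/
def Pmn (m n : ℕ) : Prop :=
  ∀ (a b : Fin m → ℕ+) (c : Fin n → ℕ+),
    (∀ i, Odd (a i : ℕ)) → (∀ i, Odd (b i : ℕ)) → (∀ j, Even (c j : ℕ)) →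
    ZA (zTuple a b c) = 0 ∧ ZSA (zTuple a b c) = 0

/-- The list `{c}^{n₀}, a, {c}^{n₁}, b, {c}^{n₂}, …, a, {c}^{n_{2m-1}}, b, {c}^{n_{2m}}`. -/
def bbList (a b c : ℕ) (m : ℕ) (f : Fin (2 * m + 1) → ℕ) : List ℕ :=
  (List.ofFn (fun j : Fin m =>
      List.replicate (f ⟨2 * j.val, by have := j.isLt; omega⟩) c ++ [a]
        ++ List.replicate (f ⟨2 * j.val + 1, by have := j.isLt; omega⟩) c ++ [b])).flatten
    ++ List.replicate (f ⟨2 * m, by omega⟩) c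

/-!
Substituting `mᵢ ↦ p - mᵢ` in `∑_{p > m₁ ≥ ⋯ ≥ mₙ ≥ 1} ∏ mᵢ^{-kᵢ}` turns each factor `mᵢ^{-kᵢ}`
into `(-1)^{kᵢ} mᵢ^{-kᵢ}` modulo `p` and reverses the order of the chain, so it becomes
`(-1)^{k₁+⋯+kₙ}` times the same sum over `1 ≤ m₁ ≤ ⋯ ≤ mₙ < p`, which is `ζ⋆_p(kₙ,…,k₁)`.
-/

open Finset

section NestedSums

variable {R : Type*} [CommSemiring R] (w : ℕ → R)

/-- `descStarSum w ks a b = ∑_{b > m₁ ≥ ⋯ ≥ mₙ ≥ a} ∏ w(mᵢ)^{kᵢ}`. -/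
def descStarSum : List ℕ → ℕ → ℕ → R
  | [], _, _ => 1
  | k :: ks, a, b => ∑ m ∈ Ico a b, w m ^ k * descStarSum ks a (m + 1)

def ascStarSum : List ℕ → ℕ → ℕ → R
  | [], _, _ => 1
  | k :: ks, a, b => ∑ m ∈ Ico a b, w m ^ k * ascStarSum ks m b

theorem descStarSum_append_singleton (ks : List ℕ) (k a b : ℕ) :
    descStarSum w (ks ++ [k]) a b = ∑ m ∈ Ico a b, w m ^ k * descStarSum w ks m b := by
  induction ks generalizing b with
  | nil => simp [descStarSum]
  | cons j ks ih =>
    simp only [List.cons_append, descStarSum, ih, mul_sum]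
    rw [sum_comm' (t' := Ico a b) (s' := fun m => Ico m b)
      (fun m₁ m => by simp only [mem_Ico]; omega)]
    exact sum_congr rfl fun _ _ => sum_congr rfl fun _ _ => mul_left_comm _ _ _

theorem ascStarSum_eq_descStarSum_reverse (ks : List ℕ) (a b : ℕ) :
    ascStarSum w ks a b = descStarSum w ks.reverse a b := by
  induction ks generalizing a with
  | nil => rfl
  | cons k ks ih => simp only [ascStarSum, ih, List.reverse_cons, descStarSum_append_singleton]

end NestedSums

theorem descStarSum_eq_neg_one_pow_mul_ascStarSum {R : Type*} [CommRing R] (w : ℕ → R)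
    (c : ℕ) (hw : ∀ m ≤ c, w (c - m) = -w m) (ks : List ℕ) (a b : ℕ) (hb : b ≤ c + 1) :
    descStarSum w ks a b = (-1) ^ ks.sum * ascStarSum w ks (c + 1 - b) (c + 1 - a) := by
  induction ks generalizing b with
  | nil => simp [descStarSum, ascStarSum]
  | cons k ks ih =>
    rw [descStarSum, ascStarSum, ← sum_Ico_reflect _ _ hb, mul_sum]
    refine sum_congr rfl fun m hm => ?_
    have hmc : m ≤ c := by grind
    rw [hw m hmc, ih (m + 1) (by grind),
      show c + 1 - (m + 1) = c - m by omega, List.sum_cons, pow_add, neg_pow]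
    have hsq : (-1 : R) ^ k * (-1) ^ k = 1 := by
      rw [← pow_add]; exact (Even.add_self k).neg_one_pow
    linear_combination (-(w m ^ k * (-1) ^ ks.sum * ascStarSum w ks (c - m) (c + 1 - a))) * hsq

theorem zetaStarSum_eq_descStarSum (p : ℕ) (ks : List ℕ) (b : ℕ) :
    zetaStarSum p ks b = descStarSum (fun m : ℕ => (m : ZMod p)⁻¹) ks 1 b := by
  induction ks generalizing b with
  | nil => rfl
  | cons k ks ih => simp only [zetaStarSum, descStarSum, ih]

theorem zetaStarSum_eq_neg_one_pow_mul_reverse (p : ℕ) [Fact p.Prime] (ks : List ℕ) :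
    zetaStarSum p ks p = (-1) ^ ks.sum * zetaStarSum p ks.reverse p := by
  have hw (m : ℕ) (hm : m ≤ p) : ((p - m : ℕ) : ZMod p)⁻¹ = -(m : ZMod p)⁻¹ := by
    rw [Nat.cast_sub hm, ZMod.natCast_self, zero_sub, inv_neg]
  rw [zetaStarSum_eq_descStarSum, zetaStarSum_eq_descStarSum,
    descStarSum_eq_neg_one_pow_mul_ascStarSum _ p hw ks 1 p (by omega),
    ascStarSum_eq_descStarSum_reverse, Nat.add_sub_cancel_left, Nat.add_sub_cancel]

theorem zetaStarA_reverse (ks : List ℕ) :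
    zetaStarA ks.reverse = (-1 : A) ^ ks.sum * zetaStarA ks := by
  have hp (p : Nat.Primes) :
      zetaStarSum p ks.reverse p = (-1) ^ ks.sum * zetaStarSum p ks p := by
    have : Fact (p : ℕ).Prime := ⟨p.2⟩
    rw [zetaStarSum_eq_neg_one_pow_mul_reverse p ks.reverse, List.reverse_reverse,
      List.sum_reverse]
  have hfun : (fun p : Nat.Primes => zetaStarSum p ks.reverse p)
      = (-1) ^ ks.sum * fun p : Nat.Primes => zetaStarSum p ks p :=
    funext hp
  rw [zetaStarA, zetaStarA, hfun, map_mul, map_pow, map_neg, map_one]
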